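/- arXiv:2303.04842 — 5 statements merged into one kernel-verified Lean document; each statement's English description precedes it below -/
import Mathlib

section
/- Consider an N-agent finite-horizon dynamic game over horizon T with decoupled dynamics x^i_{k+1} = f^i(x^i_k, u^i_k) for each agent i, fixed initial states x^i_0, and agent costs J^i(u) = S^i(x_T) + Σ_{k=0}^{T-1} L^i(x_k, u_k), where x_k denotes the joint state and u_k the joint control at time k and the states are the rollouts determined by the controls. Suppose there exist functions p, s̄ (depending on the joint state and control), and for each agent i functions c^i, s^i depending only on the states and controls of the agents other than i, such that L^i(x_k, u_k) = p(x_k, u_k) + c^i(x_k^{-i}, u_k^{-i}) for all k and S^i(x_T) = s̄(x_T) + s^i(x_T^{-i}). Then any joint open-loop control sequence u* that minimizes the potential objective Σ_{k=0}^{T-1} p(x_k, u_k) + s̄(x_T) over all joint control sequences (with states given by the rollouts) is an open-loop Nash equilibrium: for every agent i and every alternative control sequence u^i for agent i, J^i(u*) ≤ J^i(u^i, u^{-i*}). -/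
open Finset

noncomputable section

/-- Rollout of a single agent's decoupled dynamics from initial state `x0`
under control sequence `u`. -/
def rollout {X U : Type} (f : X → U → X) (x0 : X) (u : ℕ → U) : ℕ → X
  | 0 => x0
  | k + 1 => f (rollout f x0 u k) (u k)

/-- Joint state at time `k` obtained by rolling out each agent's decoupled
dynamics `x^i_{k+1} = f^i(x^i_k, u^i_k)` from the fixed initial states `x0`. -/
def jointState {N : ℕ} {n m : Fin N → ℕ}
    (f : (i : Fin N) → (Fin (n i) → ℝ) → (Fin (m i) → ℝ) → (Fin (n i) → ℝ))
    (x0 : (i : Fin N) → Fin (n i) → ℝ)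
    (u : (i : Fin N) → ℕ → Fin (m i) → ℝ) (k : ℕ) :
    (i : Fin N) → Fin (n i) → ℝ :=
  fun i => rollout (f i) (x0 i) (u i) k

/-- In an `N`-agent finite-horizon dynamic game with decoupled
dynamics and costs decomposing as `L^i = p + c^i(x^{-i}, u^{-i})`,
`S^i = s̄ + s^i(x^{-i})`, any minimizer of the potential objective
`Σ_k p(x_k, u_k) + s̄(x_T)` (evaluated along the rollouts) is an
open-loop Nash equilibrium. -/
theorem potential_minimizer_is_open_loop_nash
    (N T : ℕ) (n m : Fin N → ℕ)
    (f : (i : Fin N) → (Fin (n i) → ℝ) → (Fin (m i) → ℝ) → (Fin (n i) → ℝ))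
    (x0 : (i : Fin N) → Fin (n i) → ℝ)
    (L : Fin N → ((j : Fin N) → Fin (n j) → ℝ) →
      ((j : Fin N) → Fin (m j) → ℝ) → ℝ)
    (S : Fin N → ((j : Fin N) → Fin (n j) → ℝ) → ℝ)
    (p : ((j : Fin N) → Fin (n j) → ℝ) → ((j : Fin N) → Fin (m j) → ℝ) → ℝ)
    (sbar : ((j : Fin N) → Fin (n j) → ℝ) → ℝ)
    (c : (i : Fin N) → ((j : {j : Fin N // j ≠ i}) → Fin (n j.1) → ℝ) →
      ((j : {j : Fin N // j ≠ i}) → Fin (m j.1) → ℝ) → ℝ)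
    (s : (i : Fin N) → ((j : {j : Fin N // j ≠ i}) → Fin (n j.1) → ℝ) → ℝ)
    -- running-cost decomposition `L^i(x,u) = p(x,u) + c^i(x^{-i}, u^{-i})`
    (hL : ∀ i x u, L i x u = p x u + c i (fun j => x j.1) (fun j => u j.1))
    -- terminal-cost decomposition `S^i(x) = s̄(x) + s^i(x^{-i})`
    (hS : ∀ i x, S i x = sbar x + s i (fun j => x j.1))
    -- cost `J^i(u) = S^i(x_T) + Σ_{k<T} L^i(x_k, u_k)` along the rollout
    (J : Fin N → ((i : Fin N) → ℕ → Fin (m i) → ℝ) → ℝ)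
    (hJ : ∀ i u, J i u =
      S i (jointState f x0 u T) +
        ∑ k ∈ Finset.range T, L i (jointState f x0 u k) (fun j => u j k))
    -- potential objective `P(u) = Σ_{k<T} p(x_k, u_k) + s̄(x_T)` along the rollout
    (P : ((i : Fin N) → ℕ → Fin (m i) → ℝ) → ℝ)
    (hP : ∀ u, P u =
      (∑ k ∈ Finset.range T, p (jointState f x0 u k) (fun j => u j k)) +
        sbar (jointState f x0 u T))
    -- `u*` minimizes the potential objective over all joint control sequences
    (ustar : (i : Fin N) → ℕ → Fin (m i) → ℝ)
    (hmin : ∀ u, P ustar ≤ P u) :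
    -- `u*` is an open-loop Nash equilibrium
    ∀ (i : Fin N) (ui : ℕ → Fin (m i) → ℝ),
      J i ustar ≤ J i (Function.update ustar i ui) := by

  intro i ui
  set v := Function.update ustar i ui with hv
  have hvj : ∀ j : {j : Fin N // j ≠ i}, v j.1 = ustar j.1 := fun j =>
    Function.update_of_ne j.2 _ _
  have hxj : ∀ k (j : {j : Fin N // j ≠ i}),
      jointState f x0 v k j.1 = jointState f x0 ustar k j.1 := by
    intro k j
    simp only [jointState, hvj j]
  have key : J i v - J i ustar = P v - P ustar := by
    rw [hJ, hJ, hP, hP, hS, hS]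
    have hterm : s i (fun j => jointState f x0 v T j.1)
        = s i (fun j => jointState f x0 ustar T j.1) := by
      congr 1; funext j; rw [hxj]
    have hrun : ∀ k, c i (fun j => jointState f x0 v k j.1) (fun j => v j.1 k)
        = c i (fun j => jointState f x0 ustar k j.1) (fun j => ustar j.1 k) := by
      intro k; congr 1
      · funext j; rw [hxj]
      · funext j; rw [hvj]
    simp only [hL, Finset.sum_add_distrib]
    rw [Finset.sum_congr rfl (fun k _ => hrun k), hterm]
    ring
  have := hmin v
  linarith
end
end

section
/- In an N-agent finite-horizon dynamic game with decoupled dynamics x^i_{k+1} = f^i(x^i_k, u^i_k), fixed initial states, and costs J^i(u) = S^i(x_T) + Σ_{k=0}^{T-1} L^i(x_k, u_k) evaluated along the rollouts, suppose the costs decompose as L^i(x_k, u_k) = p(x_k, u_k) + c^i(x_k^{-i}, u_k^{-i}) and S^i(x_T) = s̄(x_T) + s^i(x_T^{-i}), where c^i and s^i do not depend on agent i's state or control. Define the potential P(u) = Σ_{k=0}^{T-1} p(x_k, u_k) + s̄(x_T) along the rollout generated by u. Then the game is an exact potential game in strategic (open-loop) form: for every agent i and any two joint control sequences u and u' that agree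 in all agents' controls except agent i's, J^i(u) − J^i(u') = P(u) − P(u'). -/
open Finset

noncomputable section

/-- In an `N`-agent finite-horizon dynamic game with decoupled
dynamics and costs decomposing as `L^i = p + c^i(x^{-i}, u^{-i})`,
`S^i = s̄ + s^i(x^{-i})`, the game is an exact potential game in open-loop
strategic form with potential `P(u) = Σ_k p(x_k, u_k) + s̄(x_T)`: unilateral
deviations of agent `i` change `J^i` exactly as much as they change `P`. -/
theorem exact_potential_game_open_loop
    (N T : ℕ) (n m : Fin N → ℕ)
    (f : (i : Fin N) → (Fin (n i) → ℝ) → (Fin (m i) → ℝ) → (Fin (n i) → ℝ))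
    (x0 : (i : Fin N) → Fin (n i) → ℝ)
    (L : Fin N → ((j : Fin N) → Fin (n j) → ℝ) →
      ((j : Fin N) → Fin (m j) → ℝ) → ℝ)
    (S : Fin N → ((j : Fin N) → Fin (n j) → ℝ) → ℝ)
    (p : ((j : Fin N) → Fin (n j) → ℝ) → ((j : Fin N) → Fin (m j) → ℝ) → ℝ)
    (sbar : ((j : Fin N) → Fin (n j) → ℝ) → ℝ)
    (c : (i : Fin N) → ((j : {j : Fin N // j ≠ i}) → Fin (n j.1) → ℝ) →
      ((j : {j : Fin N // j ≠ i}) → Fin (m j.1) → ℝ) → ℝ)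
    (s : (i : Fin N) → ((j : {j : Fin N // j ≠ i}) → Fin (n j.1) → ℝ) → ℝ)
    -- running-cost decomposition `L^i(x,u) = p(x,u) + c^i(x^{-i}, u^{-i})`
    (hL : ∀ i x u, L i x u = p x u + c i (fun j => x j.1) (fun j => u j.1))
    -- terminal-cost decomposition `S^i(x) = s̄(x) + s^i(x^{-i})`
    (hS : ∀ i x, S i x = sbar x + s i (fun j => x j.1))
    -- cost `J^i(u) = S^i(x_T) + Σ_{k<T} L^i(x_k, u_k)` along the rollout
    (J : Fin N → ((i : Fin N) → ℕ → Fin (m i) → ℝ) → ℝ)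
    (hJ : ∀ i u, J i u =
      S i (jointState f x0 u T) +
        ∑ k ∈ Finset.range T, L i (jointState f x0 u k) (fun j => u j k))
    -- potential `P(u) = Σ_{k<T} p(x_k, u_k) + s̄(x_T)` along the rollout
    (P : ((i : Fin N) → ℕ → Fin (m i) → ℝ) → ℝ)
    (hP : ∀ u, P u =
      (∑ k ∈ Finset.range T, p (jointState f x0 u k) (fun j => u j k)) +
        sbar (jointState f x0 u T)) :
    -- exact potential property: for any two joint control sequences agreeing
    -- in all agents' controls except agent `i`'s,
    -- `J^i(u) - J^i(u') = P(u) - P(u')`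
    ∀ (i : Fin N) (u u' : (j : Fin N) → ℕ → Fin (m j) → ℝ),
      (∀ j : Fin N, j ≠ i → u j = u' j) →
      J i u - J i u' = P u - P u' := by
  intro i u u' h
  have hstate : ∀ k (j : Fin N), j ≠ i →
      jointState f x0 u k j = jointState f x0 u' k j := by
    intro k j hj
    simp only [jointState, h j hj]
  have hJP : ∀ v : (j : Fin N) → ℕ → Fin (m j) → ℝ,
      J i v = P v + (s i (fun j => jointState f x0 v T j.1) +
        ∑ k ∈ Finset.range T, c i (fun j => jointState f x0 v k j.1)
          (fun j => v j.1 k)) := by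
    intro v
    rw [hJ, hP, hS]
    simp only [hL]
    rw [Finset.sum_add_distrib]
    ring
  rw [hJP u, hJP u']
  have hc : ∀ k ∈ Finset.range T,
      c i (fun j => jointState f x0 u k j.1) (fun j => u j.1 k) =
      c i (fun j => jointState f x0 u' k j.1) (fun j => u' j.1 k) := by
    intro k _
    congr 1
    · funext j; exact hstate k j.1 j.2
    · funext j; rw [h j.1 j.2]
  have hs : s i (fun j => jointState f x0 u T j.1) =
      s i (fun j => jointState f x0 u' T j.1) := by
    congr 1; funext j; exact hstate T j.1 j.2
  rw [Finset.sum_congr rfl hc, hs]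
  ring
end
end

section
/- Consider the multi-agent navigation game in which agent i's running cost is L^i(x_k, u_k) = C^i_tr(x^i_k, u^i_k) + Σ_{j ≠ i} C^{ij}_ca(x^i_k, x^j_k), where C^i_tr depends only on agent i's own state and control and C^{ij}_ca is a pairwise coupling cost. Assume the coupling costs are symmetric: C^{ij}_ca(x^i_k, x^j_k) = C^{ji}_ca(x^j_k, x^i_k) for all i ≠ j. Define p(x_k, u_k) = Σ_{i=1}^N C^i_tr(x^i_k, u^i_k) + Σ_{1 ≤ i < j ≤ N} C^{ij}_ca(x^i_k, x^j_k). Then for every agent i, the difference c^i := L^i − p depends only on the states and controls of the agents other than i; explicitly, L^i(x_k, u_k) = p(x_k, u_k) − Σ_{j ≠ i} C^j_tr(x^j_k, u^j_k) − Σ_{j < l, j ≠ i, l ≠ i} C^{jl}_ca(x^j_k, x^l_k). -/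
open Finset

noncomputable section

/-- In the multi-agent navigation game with running cost
`L^i(x,u) = C^i_tr(x^i, u^i) + Σ_{j ≠ i} C^{ij}_ca(x^i, x^j)` and symmetric
coupling costs, defining the potential
`p(x,u) = Σ_i C^i_tr(x^i, u^i) + Σ_{i<j} C^{ij}_ca(x^i, x^j)`, the difference
`c^i = L^i − p` depends only on the other agents' variables; explicitly,
`L^i(x,u) = p(x,u) − Σ_{j ≠ i} C^j_tr(x^j, u^j)
          − Σ_{j<l, j≠i, l≠i} C^{jl}_ca(x^j, x^l)`. -/
theorem navigation_running_cost_potential_decomposition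
    (N : ℕ) (n m : Fin N → ℕ)
    (Ctr : (i : Fin N) → (Fin (n i) → ℝ) → (Fin (m i) → ℝ) → ℝ)
    (Cca : (i j : Fin N) → (Fin (n i) → ℝ) → (Fin (n j) → ℝ) → ℝ)
    -- symmetry of the pairwise coupling costs
    (hsym : ∀ i j : Fin N, i ≠ j → ∀ (xi : Fin (n i) → ℝ) (xj : Fin (n j) → ℝ),
      Cca i j xi xj = Cca j i xj xi)
    (x : (j : Fin N) → Fin (n j) → ℝ)
    (u : (j : Fin N) → Fin (m j) → ℝ)
    (i : Fin N) :
    -- L^i(x,u)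
    (Ctr i (x i) (u i) +
        ∑ j ∈ Finset.univ.filter (fun j => j ≠ i), Cca i j (x i) (x j))
    =
    -- p(x,u)
    ((∑ j, Ctr j (x j) (u j)) +
        ∑ j, ∑ l ∈ Finset.univ.filter (fun l => j < l), Cca j l (x j) (x l))
    -- − Σ_{j ≠ i} C^j_tr(x^j, u^j)
    - (∑ j ∈ Finset.univ.filter (fun j => j ≠ i), Ctr j (x j) (u j))
    -- − Σ_{j<l, j≠i, l≠i} C^{jl}_ca(x^j, x^l)
    - (∑ j, ∑ l ∈ Finset.univ.filter (fun l => j < l ∧ j ≠ i ∧ l ≠ i),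
        Cca j l (x j) (x l)) := by

  classical
  set f : (j : Fin N) → (l : Fin N) → ℝ := fun j l => Cca j l (x j) (x l) with hf
  -- split the tracking sum
  have hfilter : (Finset.univ.filter (fun j => j ≠ i)) = (Finset.univ.erase i) :=
    Finset.filter_ne' _ _
  have htr : (∑ j, Ctr j (x j) (u j))
      = Ctr i (x i) (u i) + ∑ j ∈ Finset.univ.filter (fun j => j ≠ i), Ctr j (x j) (u j) := by
    rw [hfilter, ← Finset.add_sum_erase Finset.univ (fun j => Ctr j (x j) (u j)) (Finset.mem_univ i)]
  -- split each inner pair sum by whether the pair avoids i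
  have hsplit : ∀ j : Fin N, (∑ l ∈ Finset.univ.filter (fun l => j < l), f j l)
      = (∑ l ∈ Finset.univ.filter (fun l => j < l ∧ j ≠ i ∧ l ≠ i), f j l)
        + ∑ l ∈ Finset.univ.filter (fun l => j < l ∧ ¬(j ≠ i ∧ l ≠ i)), f j l := by
    intro j
    rw [← Finset.sum_filter_add_sum_filter_not (Finset.univ.filter (fun l => j < l))
      (fun l => j ≠ i ∧ l ≠ i), Finset.filter_filter, Finset.filter_filter]
  -- the pairs touching i give exactly the coupling sum of agent i
  have h2 : (∑ j, ∑ l ∈ Finset.univ.filter (fun l => j < l ∧ ¬(j ≠ i ∧ l ≠ i)), f j l)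
      = ∑ j ∈ Finset.univ.filter (fun j => j ≠ i), f i j := by
    rw [hfilter]
    rw [← Finset.add_sum_erase Finset.univ
      (fun j => ∑ l ∈ Finset.univ.filter (fun l => j < l ∧ ¬(j ≠ i ∧ l ≠ i)), f j l)
      (Finset.mem_univ i)]
    rw [← Finset.sum_filter_add_sum_filter_not (Finset.univ.erase i) (fun j => j < i)
      (fun j => f i j)]
    rw [add_comm (∑ j ∈ (Finset.univ.erase i).filter (fun j => j < i), f i j) _]
    congr 1
    · -- term at j = i : pairs (i, l) with i < l
      have h3 : (Finset.univ.filter (fun l => i < l ∧ ¬(i ≠ i ∧ l ≠ i)))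
          = ((Finset.univ.erase i).filter (fun j => ¬ j < i)) := by
        ext l
        simp only [Finset.mem_filter, Finset.mem_erase, Finset.mem_univ, true_and, and_true]
        constructor
        · rintro ⟨h1, -⟩
          exact ⟨(Fin.lt_iff_val_lt_val.mp h1).ne' ∘ congrArg Fin.val ∘ congrArg id |>.comp (fun h => h ▸ rfl), not_lt.mpr h1.le⟩
        · rintro ⟨hne, hnlt⟩
          refine ⟨lt_of_le_of_ne (not_lt.mp hnlt) (Ne.symm ?_), by simp⟩
          exact fun h => hne h
      rw [h3]
    · -- terms at j ≠ i : pair (j, i) with j < i, using symmetry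
      rw [Finset.sum_filter]
      apply Finset.sum_congr rfl
      intro j hj
      have hji : j ≠ i := (Finset.mem_erase.mp hj).1
      by_cases hlt : j < i
      · rw [if_pos hlt]
        have hset : (Finset.univ.filter (fun l => j < l ∧ ¬(j ≠ i ∧ l ≠ i))) = {i} := by
          ext l
          simp only [Finset.mem_filter, Finset.mem_univ, true_and, Finset.mem_singleton,
            not_and_or, not_ne_iff]
          constructor
          · rintro ⟨-, h | h⟩
            · exact absurd h hji
            · exact h
          · rintro rfl
            exact ⟨hlt, Or.inr rfl⟩
        rw [hset, Finset.sum_singleton]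
        exact hsym j i hji (x j) (x i)
      · rw [if_neg hlt]
        have hset : (Finset.univ.filter (fun l => j < l ∧ ¬(j ≠ i ∧ l ≠ i))) = ∅ := by
          ext l
          simp only [Finset.mem_filter, Finset.mem_univ, true_and, Finset.notMem_empty,
            iff_false, not_and_or, not_ne_iff, not_and]
          by_cases hl : l = i
          · subst hl; exact Or.inl hlt
          · exact Or.inr (by simp [hji, hl])
        rw [hset, Finset.sum_empty]
  have hpair : (∑ j, ∑ l ∈ Finset.univ.filter (fun l => j < l), f j l)
      = (∑ j, ∑ l ∈ Finset.univ.filter (fun l => j < l ∧ j ≠ i ∧ l ≠ i), f j l)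
        + ∑ j ∈ Finset.univ.filter (fun j => j ≠ i), f i j := by
    rw [← h2, ← Finset.sum_add_distrib]
    exact Finset.sum_congr rfl (fun j _ => hsplit j)
  have hfi : (∑ j ∈ Finset.univ.filter (fun j => j ≠ i), Cca i j (x i) (x j))
      = ∑ j ∈ Finset.univ.filter (fun j => j ≠ i), f i j := rfl
  rw [hfi, htr, hpair]
  ring
end
end

section
/- Consider the N-agent navigation dynamic game over horizon T with decoupled dynamics x^i_{k+1} = f^i(x^i_k, u^i_k), fixed initial states, running costs L^i(x_k, u_k) = C^i_tr(x^i_k, u^i_k) + Σ_{j ≠ i} C^{ij}_ca(x^i_k, x^j_k) with symmetric couplings C^{ij}_ca(x^i_k, x^j_k) = C^{ji}_ca(x^j_k, x^i_k), and zero terminal costs, so that J^i(u) = Σ_{k=0}^{T-1} L^i(x_k, u_k) along the rollout. Then any joint control sequence u* that minimizes Σ_{k=0}^{T-1} p(x_k, u_k) over all joint control sequences, where p(x_k, u_k) = Σ_{i=1}^N C^i_tr(x^i_k, u^i_k) + Σ_{1 ≤ i < j ≤ N} C^{ij}_ca(x^i_k, x^j_k) and the states are the rollouts, is an open-loop Nash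 equilibrium: for every agent i and every alternative control sequence u^i for agent i, J^i(u*) ≤ J^i(u^i, u^{-i*}). -/
open Finset

noncomputable section

/-- Auxiliary: a sum over ordered pairs of a function vanishing off row/column `i`,
symmetric against `i`, collapses to a sum over `j ≠ i`. -/
lemma sum_lt_pairs_eq {N : ℕ} (i : Fin N) (G : Fin N → Fin N → ℝ)
    (h0 : ∀ a b, a ≠ i → b ≠ i → G a b = 0)
    (hs : ∀ a, G a i = G i a) :
    ∑ a, ∑ b ∈ Finset.univ.filter (fun b => a < b), G a b
      = ∑ j ∈ Finset.univ.filter (fun j => j ≠ i), G i j := by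
  have hinner : ∀ a, a ≠ i →
      (∑ b ∈ Finset.univ.filter (fun b => a < b), G a b)
        = if a < i then G i a else 0 := by
    intro a ha
    by_cases hai : a < i
    · rw [if_pos hai, ← hs a]
      apply Finset.sum_eq_single_of_mem
      · simp [hai]
      · intro b _ hb
        rcases eq_or_ne b i with rfl | hbi
        · exact absurd rfl hb
        · exact h0 a b ha hbi
    · rw [if_neg hai]
      apply Finset.sum_eq_zero
      intro b hb
      simp only [Finset.mem_filter, Finset.mem_univ, true_and] at hb
      have hbi : b ≠ i := by
        rintro rfl
        exact hai hb
      exact h0 a b ha hbi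
  have hsplit : ∀ (g : Fin N → ℝ),
      (∑ a, g a) = g i + ∑ a ∈ Finset.univ.filter (fun a => a ≠ i), g a := by
    intro g
    rw [Finset.filter_ne', Finset.add_sum_erase _ g (Finset.mem_univ i)]
  rw [hsplit]
  have h1 : (∑ a ∈ Finset.univ.filter (fun a => a ≠ i),
      ∑ b ∈ Finset.univ.filter (fun b => a < b), G a b)
      = ∑ a ∈ Finset.univ.filter (fun a => a ≠ i), if a < i then G i a else 0 :=
    Finset.sum_congr rfl fun a ha => hinner a (by simpa using ha)
  rw [h1]
  have h2 : (∑ a ∈ Finset.univ.filter (fun a => a ≠ i), if a < i then G i a else 0)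
      = ∑ a ∈ Finset.univ.filter (fun a => a < i), G i a := by
    rw [← Finset.sum_filter, Finset.filter_filter]
    apply Finset.sum_congr _ (fun _ _ => rfl)
    apply Finset.filter_congr
    intro a _
    constructor
    · rintro ⟨_, h⟩; exact h
    · intro h; exact ⟨ne_of_lt h, h⟩
  rw [h2]
  have h3 : (∑ j ∈ Finset.univ.filter (fun j => j ≠ i), G i j)
      = (∑ j ∈ Finset.univ.filter (fun j => i < j), G i j)
        + ∑ j ∈ Finset.univ.filter (fun j => j < i), G i j := by
    rw [← Finset.sum_filter_add_sum_filter_not (Finset.univ.filter (fun j => j ≠ i))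
      (fun j => i < j), Finset.filter_filter, Finset.filter_filter]
    congr 1
    · apply Finset.sum_congr _ (fun _ _ => rfl)
      apply Finset.filter_congr
      intro a _
      constructor
      · rintro ⟨_, h⟩; exact h
      · intro h; exact ⟨(ne_of_lt h).symm, h⟩
    · apply Finset.sum_congr _ (fun _ _ => rfl)
      apply Finset.filter_congr
      intro a _
      constructor
      · rintro ⟨h1, h2⟩; exact lt_of_le_of_ne (not_lt.mp h2) h1
      · intro h; exact ⟨ne_of_lt h, not_lt.mpr (le_of_lt h)⟩
  rw [h3]

/-- In the `N`-agent navigation dynamic game with decoupled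
dynamics, running cost `L^i = C^i_tr(x^i,u^i) + Σ_{j≠i} C^{ij}_ca(x^i,x^j)`
with symmetric couplings, and zero terminal costs, any minimizer of
`Σ_k p(x_k, u_k)` along the rollouts, where
`p(x,u) = Σ_i C^i_tr(x^i,u^i) + Σ_{i<j} C^{ij}_ca(x^i,x^j)`, is an open-loop
Nash equilibrium. -/
theorem navigation_potential_minimizer_is_open_loop_nash
    (N T : ℕ) (n m : Fin N → ℕ)
    (f : (i : Fin N) → (Fin (n i) → ℝ) → (Fin (m i) → ℝ) → (Fin (n i) → ℝ))
    (x0 : (i : Fin N) → Fin (n i) → ℝ)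
    (Ctr : (i : Fin N) → (Fin (n i) → ℝ) → (Fin (m i) → ℝ) → ℝ)
    (Cca : (i j : Fin N) → (Fin (n i) → ℝ) → (Fin (n j) → ℝ) → ℝ)
    -- symmetry of the pairwise coupling costs
    (hsym : ∀ i j : Fin N, i ≠ j → ∀ (xi : Fin (n i) → ℝ) (xj : Fin (n j) → ℝ),
      Cca i j xi xj = Cca j i xj xi)
    -- running cost `L^i(x,u) = C^i_tr(x^i,u^i) + Σ_{j≠i} C^{ij}_ca(x^i,x^j)`
    (L : Fin N → ((j : Fin N) → Fin (n j) → ℝ) →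
      ((j : Fin N) → Fin (m j) → ℝ) → ℝ)
    (hL : ∀ i x u, L i x u = Ctr i (x i) (u i) +
      ∑ j ∈ Finset.univ.filter (fun j => j ≠ i), Cca i j (x i) (x j))
    -- potential `p(x,u) = Σ_i C^i_tr(x^i,u^i) + Σ_{i<j} C^{ij}_ca(x^i,x^j)`
    (p : ((j : Fin N) → Fin (n j) → ℝ) → ((j : Fin N) → Fin (m j) → ℝ) → ℝ)
    (hp : ∀ x u, p x u = (∑ i, Ctr i (x i) (u i)) +
      ∑ i, ∑ j ∈ Finset.univ.filter (fun j => i < j), Cca i j (x i) (x j))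
    -- zero terminal costs: `J^i(u) = Σ_{k<T} L^i(x_k, u_k)` along the rollout
    (J : Fin N → ((i : Fin N) → ℕ → Fin (m i) → ℝ) → ℝ)
    (hJ : ∀ i u, J i u =
      ∑ k ∈ Finset.range T, L i (jointState f x0 u k) (fun j => u j k))
    -- `u*` minimizes `Σ_{k<T} p(x_k, u_k)` over all joint control sequences
    (ustar : (i : Fin N) → ℕ → Fin (m i) → ℝ)
    (hmin : ∀ u : (i : Fin N) → ℕ → Fin (m i) → ℝ,
      (∑ k ∈ Finset.range T,
        p (jointState f x0 ustar k) (fun j => ustar j k)) ≤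
      ∑ k ∈ Finset.range T, p (jointState f x0 u k) (fun j => u j k)) :
    -- `u*` is an open-loop Nash equilibrium
    ∀ (i : Fin N) (ui : ℕ → Fin (m i) → ℝ),
      J i ustar ≤ J i (Function.update ustar i ui) := by
  intro i ui
  set u' : (i : Fin N) → ℕ → Fin (m i) → ℝ := Function.update ustar i ui with hu'
  -- states of other agents are unchanged
  have hx : ∀ (k : ℕ) (j : Fin N), j ≠ i →
      jointState f x0 u' k j = jointState f x0 ustar k j := by
    intro k j hj
    unfold jointState
    rw [hu', Function.update_of_ne hj]
  have hu : ∀ (j : Fin N), j ≠ i → u' j = ustar j := by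
    intro j hj
    rw [hu', Function.update_of_ne hj]
  -- per-step identity : L-difference equals p-difference
  have key : ∀ k : ℕ,
      L i (jointState f x0 u' k) (fun j => u' j k)
        - L i (jointState f x0 ustar k) (fun j => ustar j k)
      = p (jointState f x0 u' k) (fun j => u' j k)
        - p (jointState f x0 ustar k) (fun j => ustar j k) := by
    intro k
    set X' := jointState f x0 u' k with hX'
    set X := jointState f x0 ustar k with hX
    rw [hL, hL, hp, hp]
    have hXeq : ∀ jj : Fin N, jj ≠ i → X' jj = X jj := fun jj h => hx k jj h
    have hueq : ∀ jj : Fin N, jj ≠ i → u' jj k = ustar jj k :=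
      fun jj h => congrFun (hu jj h) k
    set G : Fin N → Fin N → ℝ :=
      fun a b => Cca a b (X' a) (X' b) - Cca a b (X a) (X b) with hG
    have h0 : ∀ a b, a ≠ i → b ≠ i → G a b = 0 := by
      intro a b ha hb
      rw [hG]
      simp only
      rw [hXeq a ha, hXeq b hb, sub_self]
    have hs : ∀ a, G a i = G i a := by
      intro a
      rcases eq_or_ne a i with rfl | ha
      · rfl
      · rw [hG]
        simp only
        rw [hsym a i ha, hsym a i ha]
    have hCtr : (∑ a, Ctr a (X' a) (u' a k)) - ∑ a, Ctr a (X a) (ustar a k)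
        = Ctr i (X' i) (u' i k) - Ctr i (X i) (ustar i k) := by
      rw [← Finset.sum_sub_distrib]
      apply Finset.sum_eq_single_of_mem _ (Finset.mem_univ i)
      intro b _ hb
      rw [hXeq b hb, hueq b hb, sub_self]
    have hCca : (∑ a, ∑ b ∈ Finset.univ.filter (fun b => a < b), Cca a b (X' a) (X' b))
        - (∑ a, ∑ b ∈ Finset.univ.filter (fun b => a < b), Cca a b (X a) (X b))
        = (∑ j ∈ Finset.univ.filter (fun j => j ≠ i), Cca i j (X' i) (X' j))
          - ∑ j ∈ Finset.univ.filter (fun j => j ≠ i), Cca i j (X i) (X j) := by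
      rw [← Finset.sum_sub_distrib, ← Finset.sum_sub_distrib]
      have : ∀ a, (∑ b ∈ Finset.univ.filter (fun b => a < b), Cca a b (X' a) (X' b))
          - (∑ b ∈ Finset.univ.filter (fun b => a < b), Cca a b (X a) (X b))
          = ∑ b ∈ Finset.univ.filter (fun b => a < b), G a b := by
        intro a; rw [← Finset.sum_sub_distrib]
      simp only [this]
      rw [sum_lt_pairs_eq i G h0 hs]
    linarith [hCtr, hCca]
  -- sum the per-step identity over k and combine with optimality
  have hsum : J i u' - J i ustar
      = (∑ k ∈ Finset.range T, p (jointState f x0 u' k) (fun j => u' j k))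
        - ∑ k ∈ Finset.range T, p (jointState f x0 ustar k) (fun j => ustar j k) := by
    rw [hJ, hJ, ← Finset.sum_sub_distrib, ← Finset.sum_sub_distrib]
    exact Finset.sum_congr rfl fun k _ => key k
  have := hmin u'
  linarith [hsum, this]
end
end

section
/- Consider an N-agent finite-horizon dynamic game with decoupled dynamics x^i_{k+1} = f^i(x^i_k, u^i_k), fixed initial states, and costs J^i(u) = S^i(x_T) + Σ_{k=0}^{T-1} L^i(x_k, u_k) along the rollouts, where L^i(x_k, u_k) = p(x_k, u_k) + c^i(x_k^{-i}, u_k^{-i}) and S^i(x_T) = s̄(x_T) + s^i(x_T^{-i}), with c^i and s^i independent of agent i's state and control. Then for each agent i there exists a function ψ^i, depending only on the control sequences of the agents other than i, such that J^i(u) = P(u) + ψ^i(u^{-i}) for every joint control sequence u, where P(u) = Σ_{k=0}^{T-1} p(x_k, u_k) + s̄(x_T) is the potential evaluated along the rollout generated by u. -/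
open Finset

noncomputable section

/-- In an `N`-agent finite-horizon dynamic game with decoupled
dynamics and costs decomposing as `L^i = p + c^i(x^{-i}, u^{-i})`,
`S^i = s̄ + s^i(x^{-i})`, each agent's cost decomposes as
`J^i(u) = P(u) + ψ^i(u^{-i})`, where `P(u) = Σ_k p(x_k, u_k) + s̄(x_T)` is the
potential along the rollout and `ψ^i` depends only on the other agents'
control sequences. -/
theorem cost_decomposes_as_potential_plus_residual
    (N T : ℕ) (n m : Fin N → ℕ)
    (f : (i : Fin N) → (Fin (n i) → ℝ) → (Fin (m i) → ℝ) → (Fin (n i) → ℝ))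
    (x0 : (i : Fin N) → Fin (n i) → ℝ)
    (L : Fin N → ((j : Fin N) → Fin (n j) → ℝ) →
      ((j : Fin N) → Fin (m j) → ℝ) → ℝ)
    (S : Fin N → ((j : Fin N) → Fin (n j) → ℝ) → ℝ)
    (p : ((j : Fin N) → Fin (n j) → ℝ) → ((j : Fin N) → Fin (m j) → ℝ) → ℝ)
    (sbar : ((j : Fin N) → Fin (n j) → ℝ) → ℝ)
    (c : (i : Fin N) → ((j : {j : Fin N // j ≠ i}) → Fin (n j.1) → ℝ) →
      ((j : {j : Fin N // j ≠ i}) → Fin (m j.1) → ℝ) → ℝ)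
    (s : (i : Fin N) → ((j : {j : Fin N // j ≠ i}) → Fin (n j.1) → ℝ) → ℝ)
    -- running-cost decomposition `L^i(x,u) = p(x,u) + c^i(x^{-i}, u^{-i})`
    (hL : ∀ i x u, L i x u = p x u + c i (fun j => x j.1) (fun j => u j.1))
    -- terminal-cost decomposition `S^i(x) = s̄(x) + s^i(x^{-i})`
    (hS : ∀ i x, S i x = sbar x + s i (fun j => x j.1))
    -- cost `J^i(u) = S^i(x_T) + Σ_{k<T} L^i(x_k, u_k)` along the rollout
    (J : Fin N → ((i : Fin N) → ℕ → Fin (m i) → ℝ) → ℝ)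
    (hJ : ∀ i u, J i u =
      S i (jointState f x0 u T) +
        ∑ k ∈ Finset.range T, L i (jointState f x0 u k) (fun j => u j k))
    -- potential `P(u) = Σ_{k<T} p(x_k, u_k) + s̄(x_T)` along the rollout
    (P : ((i : Fin N) → ℕ → Fin (m i) → ℝ) → ℝ)
    (hP : ∀ u, P u =
      (∑ k ∈ Finset.range T, p (jointState f x0 u k) (fun j => u j k)) +
        sbar (jointState f x0 u T)) :
    -- for each agent `i` there is a residual `ψ^i` depending only on `u^{-i}`
    ∀ i : Fin N, ∃ ψ : ((j : {j : Fin N // j ≠ i}) → ℕ → Fin (m j.1) → ℝ) → ℝ,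
      ∀ u : (j : Fin N) → ℕ → Fin (m j) → ℝ,
        J i u = P u + ψ (fun j => u j.1) := by
  intro i
  refine ⟨fun v => s i (fun j => rollout (f j.1) (x0 j.1) (v j) T) +
    ∑ k ∈ Finset.range T,
      c i (fun j => rollout (f j.1) (x0 j.1) (v j) k) (fun j => v j k), ?_⟩
  intro u
  simp only [hJ, hP, hL, hS, jointState, Finset.sum_add_distrib]
  ring
end
end
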